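/- arXiv:1301.0339 — 2 statements merged into one kernel-verified Lean document; each statement's English description precedes it below -/
import Mathlib

section
/- Let A ∈ ℝ^{m×n} and S ∈ ℝ^{n×p} both have all entries nonnegative, set X = A·S, and suppose S satisfies the NNA condition: for each i ∈ {1,…,n} there exists j_i with S_{i,j_i} > 0 and S_{k,j_i} = 0 for all k ≠ i. Then cone(X) = cone(A): a vector is a nonnegative linear combination of the columns of X if and only if it is a nonnegative linear combination of the columns of A. -/
/-- Under the NNA condition on nonnegative `S`, the cone generated by the columns of
`X = A * S` coincides with the cone generated by the columns of `A`. -/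
theorem cone_eq_cone_of_nna {m n p : ℕ}
    (A : Matrix (Fin m) (Fin n) ℝ) (S : Matrix (Fin n) (Fin p) ℝ)
    (hA : ∀ i j, 0 ≤ A i j) (hS : ∀ i j, 0 ≤ S i j)
    (X : Matrix (Fin m) (Fin p) ℝ) (hX : X = A * S)
    (hNNA : ∀ i : Fin n, ∃ j : Fin p, 0 < S i j ∧ ∀ k, k ≠ i → S k j = 0) :
    {x : Fin m → ℝ | ∃ α : Fin p → ℝ, (∀ j, 0 ≤ α j) ∧ x = X.mulVec α} =
    {x : Fin m → ℝ | ∃ β : Fin n → ℝ, (∀ k, 0 ≤ β k) ∧ x = A.mulVec β} := by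
  subst hX
  ext x
  simp only [Set.mem_setOf_eq]
  constructor
  · rintro ⟨α, hα, rfl⟩
    refine ⟨S.mulVec α, fun k => ?_, ?_⟩
    · simp only [Matrix.mulVec, dotProduct]
      exact Finset.sum_nonneg fun j _ => mul_nonneg (hS k j) (hα j)
    · rw [Matrix.mulVec_mulVec]
  · rintro ⟨β, hβ, rfl⟩
    choose j hj1 hj2 using hNNA
    set α : Fin p → ℝ := ∑ k : Fin n, Pi.single (j k) (β k / S k (j k)) with hαdef
    have hSα : S.mulVec α = β := by
      funext i
      have : S.mulVec α i = ∑ k : Fin n, S i (j k) * (β k / S k (j k)) := by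
        rw [hαdef]
        simp only [Matrix.mulVec, dotProduct, Finset.sum_apply]
        simp_rw [Finset.mul_sum]
        rw [Finset.sum_comm]
        refine Finset.sum_congr rfl fun k _ => ?_
        rw [Finset.sum_eq_single (j k)]
        · simp
        · intro q _ hq; simp [Pi.single_eq_of_ne hq]
        · simp
      rw [this, Finset.sum_eq_single i]
      · rw [mul_div_cancel₀ _ (hj1 i).ne']
      · intro k _ hk
        rw [hj2 k i (Ne.symm hk), zero_mul]
      · simp
    refine ⟨α, fun q => ?_, ?_⟩
    · rw [hαdef]
      rw [Finset.sum_apply]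
      refine Finset.sum_nonneg fun k _ => ?_
      classical
      rcases eq_or_ne q (j k) with h | h
      · subst h; rw [Pi.single_eq_same]
        exact div_nonneg (hβ k) (hj1 k).le
      · rw [Pi.single_eq_of_ne h]
    · rw [← Matrix.mulVec_mulVec, hSα]
end

section
/- Let S ∈ ℝ^{n×p} have all entries nonnegative and satisfy the NNA condition: for each i ∈ {1,…,n} there exists a column index j_i such that S_{i,j_i} > 0 and S_{k,j_i} = 0 for all k ≠ i. Then S satisfies Assumption 1 of the paper: for each i ∈ {1,…,n}, S contains n−1 linearly independent columns whose i-th entry is zero (i.e., orthogonal to the unit coordinate vector e_i). Hence NNA is a special case of Assumption 1. -/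
/-! The NNA column `j_k` of row `k` is a nonzero multiple of `e_k`. Hence the columns `j_k`, `k ≠ i`,
are distinct, linearly independent, and vanish in row `i`. -/

open Matrix

namespace Matrix

variable {m ι R : Type*}

lemma transpose_apply_eq_single [DecidableEq m] [Zero R] {S : Matrix m ι R} {f : m → ι}
    (hf : ∀ k l, l ≠ k → S l (f k) = 0) (k : m) :
    Sᵀ (f k) = Pi.single k (S k (f k)) := by
  ext l
  rcases eq_or_ne l k with rfl | hlk
  · simp
  · simp [hf k l hlk, hlk]

lemma linearIndependent_transpose_comp [Ring R] [IsDomain R] {S : Matrix m ι R} {f : m → ι}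
    (hdiag : ∀ k, S k (f k) ≠ 0) (hf : ∀ k l, l ≠ k → S l (f k) = 0) :
    LinearIndependent R (fun k => Sᵀ (f k)) := by
  classical
  simpa only [transpose_apply_eq_single hf] using Pi.linearIndependent_single_of_ne_zero hdiag

end Matrix

theorem nna_implies_assumption_one_general {n p : ℕ}
    (S : Matrix (Fin n) (Fin p) ℝ)
    (hNNA : ∀ i : Fin n, ∃ j : Fin p, 0 < S i j ∧ ∀ k, k ≠ i → S k j = 0) :
    ∀ i : Fin n, ∃ T : Finset (Fin p), T.card = n - 1 ∧
      LinearIndependent ℝ (fun j : T => Sᵀ (j : Fin p)) ∧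
      ∀ j ∈ T, S i j = 0 := by
  choose f hf_pos hf_zero using hNNA
  have hli := linearIndependent_transpose_comp (fun k => (hf_pos k).ne') hf_zero
  have hf_inj : Function.Injective f := hli.injective.of_comp
  intro i
  refine ⟨(Finset.univ.erase i).image f, ?_, ?_, ?_⟩
  · rw [Finset.card_image_of_injective _ hf_inj, Finset.card_erase_of_mem (Finset.mem_univ i),
      Finset.card_univ, Fintype.card_fin]
  · have := (hli.linearIndepOn ↑(Finset.univ.erase i)).image_of_comp f Sᵀ
    rwa [← Finset.coe_image] at this
  · simp only [Finset.mem_image, Finset.mem_erase]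
    rintro _ ⟨k, ⟨hki, -⟩, rfl⟩
    exact hf_zero k i hki.symm

/-- NNA is a special case of Assumption 1: a nonnegative `S` satisfying NNA contains,
for each row index `i`, `n - 1` linearly independent columns whose `i`-th entry is zero. -/
theorem nna_implies_assumption_one {n p : ℕ}
    (S : Matrix (Fin n) (Fin p) ℝ) (hS : ∀ i j, 0 ≤ S i j)
    (hNNA : ∀ i : Fin n, ∃ j : Fin p, 0 < S i j ∧ ∀ k, k ≠ i → S k j = 0) :
    ∀ i : Fin n, ∃ T : Finset (Fin p), T.card = n - 1 ∧
      LinearIndependent ℝ (fun j : T => Sᵀ (j : Fin p)) ∧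
      ∀ j ∈ T, S i j = 0 :=
  nna_implies_assumption_one_general S hNNA
end
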